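/- arXiv:1910.08920 — 5 statements merged into one kernel-verified Lean document; each statement's English description precedes it below -/
import Mathlib

section
/- Every n-connector is (k, n−k)-ST-robust for every k with 1 ≤ k ≤ n. -/
/-! ## Basic digraph notions -/

/-- A directed path in a digraph `Adj`: a nonempty list of vertices, each
consecutive pair joined by a directed edge.  Its length (number of edges)
is `p.length - 1`, so a path "of length d" is a list with `p.length = d + 1`. -/
def PathIn {V : Type*} (Adj : V → V → Prop) (p : List V) : Prop :=
  p ≠ [] ∧ p.Chain' Adj

/-- A digraph is acyclic (is a DAG) if it has no directed cycle. -/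
def Acyclic {V : Type*} (Adj : V → V → Prop) : Prop :=
  ∀ v, ¬ Relation.TransGen Adj v v

/-- In-degree of a vertex. -/
noncomputable def indeg {V : Type*} (Adj : V → V → Prop) (v : V) : ℕ :=
  Nat.card {u // Adj u v}

/-- Out-degree of a vertex. -/
noncomputable def outdeg {V : Type*} (Adj : V → V → Prop) (v : V) : ℕ :=
  Nat.card {w // Adj v w}

/-- `δ(v) = max(indeg(v), outdeg(v))`. -/
noncomputable def delta {V : Type*} (Adj : V → V → Prop) (v : V) : ℕ :=
  max (indeg Adj v) (outdeg Adj v)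

/-- The number of edges of a digraph. -/
noncomputable def numEdges {V : Type*} (Adj : V → V → Prop) : ℕ :=
  Nat.card {e : V × V // Adj e.1 e.2}

/-- `(e,d)`-depth-robustness: for every set `S` of at most `e` vertices,
the graph minus `S` contains a directed path of length `d` (i.e. `d` edges). -/
def DepthRobust {V : Type*} (Adj : V → V → Prop) (e d : ℕ) : Prop :=
  ∀ S : Finset V, S.card ≤ e →
    ∃ p : List V, PathIn Adj p ∧ (∀ v ∈ p, v ∉ S) ∧ p.length = d + 1

/-- `(e,d)`-edge-depth-robustness: for every set `F` of at most `e` edges,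
the graph minus `F` contains a directed path of length `d`. -/
def EdgeDepthRobust {V : Type*} (Adj : V → V → Prop) (e d : ℕ) : Prop :=
  ∀ F : Finset (V × V), (∀ f ∈ F, Adj f.1 f.2) → F.card ≤ e →
    ∃ p : List V, PathIn (fun u w => Adj u w ∧ (u, w) ∉ F) p ∧ p.length = d + 1

/-- `u` is joined to `v` by a directed path all of whose vertices avoid `S`. -/
def ConnAvoiding {V : Type*} (Adj : V → V → Prop) (S : Finset V) (u v : V) : Prop :=
  ∃ p : List V, PathIn Adj p ∧ (∀ x ∈ p, x ∉ S) ∧ p.head? = some u ∧ p.getLast? = some v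

/-- `u` is joined to `v` by a directed path of length at least `d` avoiding `S`. -/
def ConnAvoidingLen {V : Type*} (Adj : V → V → Prop) (S : Finset V) (d : ℕ) (u v : V) : Prop :=
  ∃ p : List V, PathIn Adj p ∧ (∀ x ∈ p, x ∉ S) ∧ p.head? = some u ∧
    p.getLast? = some v ∧ d + 1 ≤ p.length

/-! ## Digraphs with designated inputs and outputs -/

/-- A finite digraph with `n` designated (distinct) inputs and `n` designated
(distinct) outputs. -/
structure IOGraph (n : ℕ) where
  V : Type
  [fin : Fintype V]
  [dec : DecidableEq V]
  Adj : V → V → Prop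
  inp : Fin n ↪ V
  out : Fin n ↪ V

attribute [instance] IOGraph.fin IOGraph.dec

/-- `(k1,k2)`-ST-robustness: after deleting any set `D` of at most `k1` vertices
there remain at least `k2` inputs and `k2` outputs such that every one of these
inputs is connected to every one of these outputs in `G - D`. -/
def STRobust {n : ℕ} (G : IOGraph n) (k1 k2 : ℕ) : Prop :=
  ∀ D : Finset G.V, D.card ≤ k1 →
    ∃ A B : Finset (Fin n), k2 ≤ A.card ∧ k2 ≤ B.card ∧
      ∀ a ∈ A, ∀ b ∈ B, ConnAvoiding G.Adj D (G.inp a) (G.out b)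

/-- `(k1,k2,d)`-ST-robustness: as `STRobust`, with all the connecting paths of
length at least `d`. -/
def STRobustD {n : ℕ} (G : IOGraph n) (k1 k2 d : ℕ) : Prop :=
  ∀ D : Finset G.V, D.card ≤ k1 →
    ∃ A B : Finset (Fin n), k2 ≤ A.card ∧ k2 ≤ B.card ∧
      ∀ a ∈ A, ∀ b ∈ B, ConnAvoidingLen G.Adj D d (G.inp a) (G.out b)

/-- Maximally ST-robust: `(k, n-k)`-ST-robust for all `0 ≤ k ≤ n`. -/
def MaxSTRobust {n : ℕ} (G : IOGraph n) : Prop := ∀ k ≤ n, STRobust G k (n - k)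

/-- Maximally ST-robust with depth `d`: `(k, n-k, d)`-ST-robust for all `0 ≤ k ≤ n`. -/
def MaxSTRobustD {n : ℕ} (G : IOGraph n) (d : ℕ) : Prop := ∀ k ≤ n, STRobustD G k (n - k) d

/-- An `n`-superconcentrator: for every `1 ≤ r ≤ n` and every `r` inputs and `r`
outputs there are `r` vertex-disjoint directed paths connecting the chosen inputs
to the chosen outputs. -/
def Superconcentrator {n : ℕ} (G : IOGraph n) : Prop :=
  ∀ r, 1 ≤ r → r ≤ n → ∀ X Y : Finset (Fin n), X.card = r → Y.card = r →
    ∃ P : Fin r → List G.V,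
      (∀ i, PathIn G.Adj (P i) ∧ (∃ x ∈ X, (P i).head? = some (G.inp x)) ∧
        ∃ y ∈ Y, (P i).getLast? = some (G.out y)) ∧
      ∀ i j, i ≠ j → ∀ v ∈ P i, v ∉ P j

/-- An `n`-connector: an `n`-superconcentrator such that moreover, for every
`1 ≤ r ≤ n`, every sequence of `r` distinct inputs and every sequence of `r`
distinct outputs, there are `r` vertex-disjoint directed paths where the `i`-th
path goes from the `i`-th chosen input to the `i`-th chosen output. -/
def Connector {n : ℕ} (G : IOGraph n) : Prop :=
  Superconcentrator G ∧
  ∀ r, 1 ≤ r → r ≤ n → ∀ x y : Fin r ↪ Fin n,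
    ∃ P : Fin r → List G.V,
      (∀ i, PathIn G.Adj (P i) ∧ (P i).head? = some (G.inp (x i)) ∧
        (P i).getLast? = some (G.out (y i))) ∧
      ∀ i j, i ≠ j → ∀ v ∈ P i, v ∉ P j

/-- A bundled finite digraph. -/
structure Dig where
  V : Type
  [fin : Fintype V]
  [dec : DecidableEq V]
  Adj : V → V → Prop

attribute [instance] Dig.fin Dig.dec

/-- `(s,t,ε)`-hardness of a graph together with a challenge set `VC`: for every
set `S` of at most `s` vertices, at least a `(1-ε)` fraction of the nodes of `VC`
have depth at least `t` in `G - S` (i.e. are the endpoint of a directed path of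
length `≥ t` in `G - S`). -/
def Hard {T : Type*} (Adj : T → T → Prop) (VC : Finset T) (s t : ℕ) (ε : ℝ) : Prop :=
  ∀ S : Finset T, S.card ≤ s →
    (1 - ε) * (VC.card : ℝ) ≤
      (Set.ncard {v | v ∈ VC ∧ ∃ p : List T, PathIn Adj p ∧ (∀ x ∈ p, x ∉ S) ∧
        p.getLast? = some v ∧ t + 1 ≤ p.length} : ℝ)

/-!
Fix `D` with `|D| ≤ k` and call an input/output pair bad if `D` separates it. In a connector,
any `r` bad pairs with distinct inputs and distinct outputs are joined by `r` vertex-disjoint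
paths, each of which must meet `D`; hence every matching of bad pairs has at most `k` edges.
The inputs and outputs left unmatched by a maximum matching of bad pairs, at least `n - k` of
each, are then pairwise connected in `G - D`.
-/

theorem Finset.card_sub_le_card_compl_image {ι γ : Type*} [Fintype γ] [DecidableEq γ]
    {M : Finset ι} {k : ℕ} (f : ι → γ) (hM : M.card ≤ k) :
    Fintype.card γ - k ≤ (M.image f)ᶜ.card := by
  have := M.card_image_le (f := f)
  rw [Finset.card_compl]
  omega

namespace Relation

variable {α β : Type*}

def IsMatching (R : α → β → Prop) (M : Finset (α × β)) : Prop :=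
  (∀ p ∈ M, R p.1 p.2) ∧ Set.InjOn Prod.fst (M : Set (α × β)) ∧
    Set.InjOn Prod.snd (M : Set (α × β))

variable {R : α → β → Prop} {M : Finset (α × β)}

theorem isMatching_empty : IsMatching R ∅ := by
  simp [IsMatching]

theorem IsMatching.insert [DecidableEq α] [DecidableEq β] (hM : IsMatching R M) {a : α} {b : β}
    (hab : R a b) (ha : ∀ p ∈ M, p.1 ≠ a) (hb : ∀ p ∈ M, p.2 ≠ b) :
    IsMatching R (insert (a, b) M) := by
  obtain ⟨hR, hfst, hsnd⟩ := hM
  refine ⟨?_, ?_, ?_⟩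
  · simpa [hab] using hR
  · rw [Finset.coe_insert, Set.injOn_insert fun h => ha _ h rfl]
    exact ⟨hfst, fun ⟨p, hp, h⟩ => ha p hp h⟩
  · rw [Finset.coe_insert, Set.injOn_insert fun h => hb _ h rfl]
    exact ⟨hsnd, fun ⟨p, hp, h⟩ => hb p hp h⟩

theorem IsMatching.exists_embeddings (hM : IsMatching R M) :
    ∃ (x : Fin M.card ↪ α) (y : Fin M.card ↪ β), ∀ i, R (x i) (y i) := by
  let e := M.equivFin.symm
  refine ⟨⟨fun i => (e i).1.1, ?_⟩, ⟨fun i => (e i).1.2, ?_⟩, fun i => hM.1 _ (e i).2⟩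
  · exact fun i j h => e.injective (Subtype.ext (hM.2.1 (e i).2 (e j).2 h))
  · exact fun i j h => e.injective (Subtype.ext (hM.2.2 (e i).2 (e j).2 h))

theorem exists_unrelated_of_isMatching_card_le [Fintype α] [Fintype β] {k : ℕ}
    (h : ∀ M, IsMatching R M → M.card ≤ k) :
    ∃ (A : Finset α) (B : Finset β), Fintype.card α - k ≤ A.card ∧
      Fintype.card β - k ≤ B.card ∧ ∀ a ∈ A, ∀ b ∈ B, ¬ R a b := by
  classical
  obtain ⟨M, hMmem, hmax⟩ := (Finset.univ.filter (IsMatching R)).exists_max_image Finset.card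
    ⟨∅, Finset.mem_filter.2 ⟨Finset.mem_univ _, isMatching_empty⟩⟩
  have hM : IsMatching R M := (Finset.mem_filter.1 hMmem).2
  have hMk := h M hM
  refine ⟨(M.image Prod.fst)ᶜ, (M.image Prod.snd)ᶜ, Finset.card_sub_le_card_compl_image _ hMk,
    Finset.card_sub_le_card_compl_image _ hMk, ?_⟩
  intro a ha b hb hab
  simp only [Finset.mem_compl, Finset.mem_image, not_exists, not_and] at ha hb
  have hbigger := hmax _ (Finset.mem_filter.2 ⟨Finset.mem_univ _, hM.insert hab ha hb⟩)
  rw [Finset.card_insert_of_notMem fun h => ha _ h rfl] at hbigger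
  omega

end Relation

theorem le_card_of_pairwise_disjoint_meet {V : Type*} {r : ℕ} {P : Fin r → List V}
    (hdisj : ∀ i j, i ≠ j → ∀ v ∈ P i, v ∉ P j) (D : Finset V) (hmeet : ∀ i, ∃ v ∈ P i, v ∈ D) :
    r ≤ D.card := by
  choose f hfP hfD using hmeet
  have hf : Function.Injective f := fun i j h => by
    by_contra hij
    exact hdisj i j hij (f i) (hfP i) (h ▸ hfP j)
  simpa using Finset.card_le_card_of_injOn f (s := Finset.univ) (fun i _ => hfD i) hf.injOn

theorem Connector.card_le_of_isMatching_separated {n : ℕ} {G : IOGraph n} (hG : Connector G)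
    (D : Finset G.V) {M : Finset (Fin n × Fin n)}
    (hM : Relation.IsMatching (fun a b => ¬ ConnAvoiding G.Adj D (G.inp a) (G.out b)) M) :
    M.card ≤ D.card := by
  obtain ⟨x, y, hxy⟩ := hM.exists_embeddings
  obtain h0 | hpos := Nat.eq_zero_or_pos M.card
  · simp [h0]
  obtain ⟨P, hP, hdisj⟩ := hG.2 M.card hpos (by simpa using Fintype.card_le_of_embedding x) x y
  refine le_card_of_pairwise_disjoint_meet hdisj D fun i => ?_
  by_contra! hmiss
  exact hxy i ⟨P i, (hP i).1, hmiss, (hP i).2⟩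

/-- Every `n`-connector is `(k, n-k)`-ST-robust for every `k`
with `1 ≤ k ≤ n`. -/
theorem connector_is_STRobust {n : ℕ} (G : IOGraph n) (hG : Connector G) :
    ∀ k, 1 ≤ k → k ≤ n → STRobust G k (n - k) := by
  intro k _ _ D hD
  obtain ⟨A, B, hA, hB, hAB⟩ := Relation.exists_unrelated_of_isMatching_card_le
    fun M hM => (hG.card_le_of_isMatching_separated D hM).trans hD
  simp only [Fintype.card_fin, not_not] at hA hB hAB
  exact ⟨A, B, hA, hB, hAB⟩
end

section
/- Let c > 0 and let H be a (c·n, n^{2/3})-depth-robust DAG on n nodes. Then for every set S of at most c·n/2 vertices of H, the graph H − S contains at least ⌊c·n^{1/3}/2⌋ pairwise vertex-disjoint directed paths, each of length n^{2/3}. -/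
/-!
Each path of length `d` has `d + 1` vertices, so after `S` and `i` disjoint paths have been
removed at most `|S| + i (d + 1)` vertices are gone; depth-robustness then yields one more path,
as long as this stays below `c n`. With `|S| ≤ c n / 2` and `d ≈ n^{2/3}` that allows
about `(c n / 2) / n^{2/3} = c n^{1/3} / 2` paths.
-/

namespace DepthRobust

variable {W : Type} {Adj : W → W → Prop} {e d : ℕ}

theorem lt_card [Fintype W] (hdr : DepthRobust Adj e d) : e < Fintype.card W := by
  by_contra! h
  obtain ⟨p, ⟨hp, -⟩, hpS, -⟩ := hdr Finset.univ (by simpa using h)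
  obtain ⟨x, hx⟩ := List.exists_mem_of_ne_nil p hp
  exact hpS x hx (Finset.mem_univ x)

theorem exists_disjoint_paths (hdr : DepthRobust Adj e d) (S : Finset W) (m : ℕ)
    (hbudget : ∀ i < m, S.card + i * (d + 1) ≤ e) :
    ∃ P : Fin m → List W,
      (∀ i, PathIn Adj (P i) ∧ (∀ v ∈ P i, v ∉ S) ∧ (P i).length = d + 1) ∧
      ∀ i j, i ≠ j → ∀ v ∈ P i, v ∉ P j := by
  classical
  induction m with
  | zero => exact ⟨Fin.elim0, fun i => i.elim0, fun i => i.elim0⟩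
  | succ m ih =>
    obtain ⟨P, hP, hdisj⟩ := ih fun i hi => hbudget i (by omega)
    let T := S ∪ Finset.univ.biUnion fun i => (P i).toFinset
    have hT : T.card ≤ e := calc
      T.card ≤ S.card + (Finset.univ.biUnion fun i => (P i).toFinset).card :=
        Finset.card_union_le _ _
      _ ≤ S.card + Finset.univ.card * (d + 1) := by
        gcongr
        refine Finset.card_biUnion_le_card_mul _ _ _ fun i _ => ?_
        exact (List.toFinset_card_le _).trans (hP i).2.2.le
      _ ≤ e := by simpa using hbudget m m.lt_succ_self
    obtain ⟨p, hp, hpT, hlen⟩ := hdr T hT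
    have hpS : ∀ v ∈ p, v ∉ S := fun v hv hvS => hpT v hv (Finset.mem_union_left _ hvS)
    have hPp : ∀ i, ∀ v ∈ P i, v ∉ p := fun i v hv hvp =>
      hpT v hvp (Finset.mem_union_right _
        (Finset.mem_biUnion.2 ⟨i, Finset.mem_univ _, List.mem_toFinset.2 hv⟩))
    refine ⟨Fin.lastCases p P, fun i => ?_, fun i j hij => ?_⟩
    · induction i using Fin.lastCases with
      | last => simpa using ⟨hp, hpS, hlen⟩
      | cast i => simpa using hP i
    · induction i using Fin.lastCases <;> induction j using Fin.lastCases <;>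
        simp only [Fin.lastCases_last, Fin.lastCases_castSucc]
      case last.last => exact absurd rfl hij
      case last.cast j => exact fun v hvp hvP => hPp j v hvP hvp
      case cast.last i => exact hPp i
      case cast.cast i j => exact hdisj i j (ne_of_apply_ne _ hij)

end DepthRobust

theorem add_mul_succ_floor_rpow_le_floor_mul {c : ℝ} {n s i : ℕ} (hcn : c * n < n)
    (hs : (s : ℝ) ≤ c * n / 2)
    (hi : i + 1 ≤ ⌊c * (n : ℝ) ^ ((1 : ℝ) / 3) / 2⌋₊) :
    s + i * (⌊(n : ℝ) ^ ((2 : ℝ) / 3)⌋₊ + 1) ≤ ⌊c * n⌋₊ := by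
  have hn : (0 : ℝ) < n := by
    rcases Nat.eq_zero_or_pos n with rfl | h
    · simp at hcn
    · exact_mod_cast h
  have hc : c < 1 := by nlinarith
  set a := c * (n : ℝ) ^ ((1 : ℝ) / 3) / 2
  set d := ⌊(n : ℝ) ^ ((2 : ℝ) / 3)⌋₊
  have hia : (i : ℝ) + 1 ≤ a := by exact_mod_cast (Nat.le_floor_iff' (by omega)).1 hi
  have hd : (d : ℝ) ≤ (n : ℝ) ^ ((2 : ℝ) / 3) := Nat.floor_le (by positivity)
  have hd' : (n : ℝ) ^ ((2 : ℝ) / 3) < d + 1 := Nat.lt_floor_add_one _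
  have hroots : (n : ℝ) ^ ((1 : ℝ) / 3) * (n : ℝ) ^ ((2 : ℝ) / 3) = n := by
    rw [← Real.rpow_add hn]; norm_num
  have hroot_le : (n : ℝ) ^ ((1 : ℝ) / 3) ≤ (n : ℝ) ^ ((2 : ℝ) / 3) :=
    Real.rpow_le_rpow_of_exponent_le (by exact_mod_cast hn) (by norm_num)
  -- `c < 1` is what keeps the number of paths `a` below their length `d + 1`.
  have ha_le : a ≤ d + 1 := by
    have : 0 < (n : ℝ) ^ ((1 : ℝ) / 3) := by positivity
    simp only [a]; nlinarith
  apply Nat.le_floor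
  push_cast
  calc (s : ℝ) + i * (d + 1) ≤ c * n / 2 + (a - 1) * (d + 1) := by gcongr; linarith
    _ = c * n / 2 + (a * d + (a - (d + 1))) := by ring
    _ ≤ c * n / 2 + (a * (n : ℝ) ^ ((2 : ℝ) / 3) + 0) := by gcongr <;> linarith
    _ = c * n := by simp only [a]; linear_combination (c / 2) * hroots

theorem disjoint_paths_in_depth_robust_general {W : Type} [Fintype W]
    (c : ℝ) (n : ℕ) (Adj : W → W → Prop)
    (hn : Nat.card W = n)
    (hdr : DepthRobust Adj ⌊c * n⌋₊ ⌊(n : ℝ) ^ ((2 : ℝ) / 3)⌋₊) :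
    ∀ S : Finset W, (S.card : ℝ) ≤ c * n / 2 →
      ∃ P : Fin ⌊c * (n : ℝ) ^ ((1 : ℝ) / 3) / 2⌋₊ → List W,
        (∀ i, PathIn Adj (P i) ∧ (∀ v ∈ P i, v ∉ S) ∧
          (P i).length = ⌊(n : ℝ) ^ ((2 : ℝ) / 3)⌋₊ + 1) ∧
        ∀ i j, i ≠ j → ∀ v ∈ P i, v ∉ P j := by
  intro S hS
  -- A depth-robust graph cannot survive the deletion of all its vertices.
  have hcn : c * n < n := by
    apply Nat.lt_of_floor_lt
    simpa [← hn, Nat.card_eq_fintype_card] using hdr.lt_card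
  exact hdr.exists_disjoint_paths S _ fun i hi => add_mul_succ_floor_rpow_le_floor_mul hcn hS hi

/-- If `H` is a `(c·n, n^{2/3})`-depth-robust DAG on `n`
nodes, then for every set `S` of at most `c·n/2` vertices, `H − S` contains at
least `⌊c·n^{1/3}/2⌋` pairwise vertex-disjoint directed paths, each of length
`n^{2/3}`. -/
theorem disjoint_paths_in_depth_robust {W : Type} [Fintype W] [DecidableEq W]
    (c : ℝ) (hc : 0 < c) (n : ℕ) (Adj : W → W → Prop)
    (hacyc : Acyclic Adj) (hn : Nat.card W = n)
    (hdr : DepthRobust Adj ⌊c * n⌋₊ ⌊(n : ℝ) ^ ((2 : ℝ) / 3)⌋₊) :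
    ∀ S : Finset W, (S.card : ℝ) ≤ c * n / 2 →
      ∃ P : Fin ⌊c * (n : ℝ) ^ ((1 : ℝ) / 3) / 2⌋₊ → List W,
        (∀ i, PathIn Adj (P i) ∧ (∀ v ∈ P i, v ∉ S) ∧
          (P i).length = ⌊(n : ℝ) ^ ((2 : ℝ) / 3)⌋₊ + 1) ∧
        ∀ i j, i ≠ j → ∀ v ∈ P i, v ∉ P j :=
  disjoint_paths_in_depth_robust_general c n Adj hn hdr
end

section
/- Let G be an n-superconcentrator with input set I and output set O, let S ⊆ V(G), and let A ⊆ O with |A| > |S|. Then the set BAD of inputs u ∈ I such that no node of A is reachable from u by a directed path in G − S satisfies |BAD| ≤ |S|. -/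
/-!
Take `|S| + 1` bad inputs and `|S| + 1` outputs of `A`. The superconcentrator joins them by
`|S| + 1` vertex-disjoint paths, and by pigeonhole one of these paths misses `S`; it then
reaches `A` from a bad input in `G - S`, which is impossible.
-/

theorem exists_forall_notMem_of_pairwise_disjoint {ι V : Type*} [Fintype ι] [DecidableEq V]
    (P : ι → List V) (hdisj : ∀ i j, i ≠ j → ∀ v ∈ P i, v ∉ P j) (S : Finset V)
    (hS : S.card < Fintype.card ι) : ∃ i, ∀ v ∈ P i, v ∉ S := by
  by_contra! hmeet
  choose hit hit_mem hit_S using hmeet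
  have hinj : Set.InjOn hit (Finset.univ : Finset ι) := fun i _ j _ hij => by
    by_contra hne
    exact hdisj i j hne (hit i) (hit_mem i) (hij ▸ hit_mem j)
  have := Finset.card_le_card_of_injOn hit (fun i _ => hit_S i) hinj
  rw [Finset.card_univ] at this
  omega

theorem Superconcentrator.exists_connAvoiding {n : ℕ} {G : IOGraph n}
    (hG : Superconcentrator G) (S : Finset G.V) {X Y : Finset (Fin n)}
    (hX : S.card < X.card) (hY : S.card < Y.card) :
    ∃ x ∈ X, ∃ y ∈ Y, ConnAvoiding G.Adj S (G.inp x) (G.out y) := by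
  obtain ⟨X', hX'X, hX'⟩ := Finset.exists_subset_card_eq (Nat.succ_le_of_lt hX)
  obtain ⟨Y', hY'Y, hY'⟩ := Finset.exists_subset_card_eq (Nat.succ_le_of_lt hY)
  have hn : S.card + 1 ≤ n := by simpa [hX'] using Finset.card_le_univ X'
  obtain ⟨P, hP, hdisj⟩ := hG (S.card + 1) (Nat.le_add_left 1 _) hn X' Y' hX' hY'
  obtain ⟨i, hi⟩ := exists_forall_notMem_of_pairwise_disjoint P hdisj S (by simp)
  obtain ⟨hpath, ⟨x, hx, hhead⟩, y, hy, hlast⟩ := hP i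
  exact ⟨x, hX'X hx, y, hY'Y hy, P i, hpath, hi, hhead, hlast⟩

/-- In an `n`-superconcentrator, for any vertex set `S` and
any set `A` of more than `|S|` outputs, the set of inputs from which no output
of `A` is reachable in `G - S` has size at most `|S|`. -/
theorem superconcentrator_bad_inputs {n : ℕ} (G : IOGraph n)
    (hG : Superconcentrator G) (S : Finset G.V) (A : Finset (Fin n))
    (hA : S.card < A.card) :
    Set.ncard {i : Fin n | ∀ a ∈ A, ¬ ConnAvoiding G.Adj S (G.inp i) (G.out a)} ≤
      S.card := by
  classical
  set BAD := {i : Fin n | ∀ a ∈ A, ¬ ConnAvoiding G.Adj S (G.inp i) (G.out a)}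
  by_contra! hBAD
  rw [Set.ncard_eq_toFinset_card' BAD] at hBAD
  obtain ⟨x, hx, a, ha, hconn⟩ := hG.exists_connAvoiding S hBAD hA
  exact (Set.mem_toFinset.mp hx) a ha hconn
end

section
/- Let c > 0 and let G be a DAG on a vertex set W containing two designated subsets P ⊆ W and Q ⊆ W such that for every S ⊆ W with |S| ≤ c·n/2 there exist sets A ⊆ P and B ⊆ Q with |A| ≥ 9c·n/40 and |B| ≥ 9c·n/40 such that every node of A is connected to every node of B by a directed path in G − S. Let M be the DAG obtained by taking an n-superconcentrator SC1 and an n-superconcentrator SC2 (vertex-disjoint from G and each other), connecting the n outputs of SC1 bijectively to n distinct nodes covering P, and connecting nodes covering Q bijectively to the n inputs of SC2; declare the inputs of M to be the inputs of SC1 and the outputs of M to be the outputs of SC2. Then, with c' = 9c/40, for every set S ⊆ V(M) with |S| ≤ c'·n/2, M is (|S|, n − |S|)-ST-robust. -/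
/-- The sandwich construction: a middle graph on vertex set `W` placed between
two `n`-superconcentrators `SC1` and `SC2`.  The `n` outputs of `SC1` are
connected bijectively (via the embedding `f`) to `n` distinct nodes of `W`
covering `P`, and `n` distinct nodes of `W` covering `Q` are connected
bijectively (via `g`) to the `n` inputs of `SC2`.  The inputs of the resulting
graph are the inputs of `SC1` and its outputs are the outputs of `SC2`. -/
def sandwich {W : Type} [Fintype W] [DecidableEq W] (GAdj : W → W → Prop)
    {n : ℕ} (SC1 SC2 : IOGraph n) (f g : Fin n ↪ W) : IOGraph n where
  V := SC1.V ⊕ W ⊕ SC2.V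
  Adj := fun x y =>
    (∃ a b, SC1.Adj a b ∧ x = Sum.inl a ∧ y = Sum.inl b) ∨
    (∃ w w', GAdj w w' ∧ x = Sum.inr (Sum.inl w) ∧ y = Sum.inr (Sum.inl w')) ∨
    (∃ a b, SC2.Adj a b ∧ x = Sum.inr (Sum.inr a) ∧ y = Sum.inr (Sum.inr b)) ∨
    (∃ i : Fin n, x = Sum.inl (SC1.out i) ∧ y = Sum.inr (Sum.inl (f i))) ∨
    (∃ i : Fin n, x = Sum.inr (Sum.inl (g i)) ∧ y = Sum.inr (Sum.inr (SC2.inp i)))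
  inp := SC1.inp.trans ⟨Sum.inl, Sum.inl_injective⟩
  out := SC2.out.trans
    ⟨fun a => Sum.inr (Sum.inr a), fun a b h => by simpa using h⟩


/-!
Delete a set `D` of at most `|S| ≤ 9cn/80` vertices from the sandwich. Its part inside `G` is
small enough for the hypothesis on `G`, which yields `A₀ ⊆ P` and `B₀ ⊆ Q`, all-to-all connected in
`G − D`, with `|A₀|, |B₀| ≥ 9cn/40 > |D|`. In a superconcentrator, at most `|D|` inputs fail to
reach a set of more than `|D|` outputs avoiding `D`: otherwise `|D| + 1` vertex-disjoint paths
from failing inputs to those outputs would each have to meet `D`. Applied to `SC1` with the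
outputs feeding `A₀`, and to the reverse of `SC2` with the inputs fed by `B₀`, this leaves
`n − |D|` inputs and `n − |D|` outputs of the sandwich, every pair joined through `A₀` and `B₀`.
-/

section ConnAvoiding

variable {V V' : Type*} {Adj : V → V → Prop} {S : Finset V} {u v w x : V}

theorem ConnAvoiding.append (h₁ : ConnAvoiding Adj S u v) (hvw : Adj v w)
    (h₂ : ConnAvoiding Adj S w x) : ConnAvoiding Adj S u x := by
  obtain ⟨p, ⟨hp, hpc⟩, hpS, hpu, hpv⟩ := h₁
  obtain ⟨q, ⟨hq, hqc⟩, hqS, hqw, hqx⟩ := h₂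
  refine ⟨p ++ q, ⟨by simp [hp], List.isChain_append.mpr ⟨hpc, hqc, ?_⟩⟩, ?_, ?_, ?_⟩
  · simp_all
  · simpa [or_imp, forall_and] using ⟨hpS, hqS⟩
  · simp [List.head?_append, hpu]
  · simp [List.getLast?_append, hqx]

theorem ConnAvoiding.map {Adj' : V' → V' → Prop} {S' : Finset V'} (φ : V → V')
    (hAdj : ∀ a b, Adj a b → Adj' (φ a) (φ b)) (hS : ∀ a, φ a ∈ S' → a ∈ S)
    (h : ConnAvoiding Adj S u v) : ConnAvoiding Adj' S' (φ u) (φ v) := by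
  obtain ⟨p, ⟨hp, hpc⟩, hpS, hpu, hpv⟩ := h
  refine ⟨p.map φ, ⟨by simpa using hp, List.isChain_map_of_isChain φ hAdj hpc⟩, ?_, ?_, ?_⟩
  · simpa using fun a ha haS => hpS a ha (hS a haS)
  · simp [hpu]
  · simp [hpv]

theorem ConnAvoiding.of_swap (h : ConnAvoiding (Function.swap Adj) S u v) :
    ConnAvoiding Adj S v u := by
  obtain ⟨p, ⟨hp, hpc⟩, hpS, hpu, hpv⟩ := h
  exact ⟨p.reverse, ⟨by simpa using hp, List.isChain_reverse.mpr hpc⟩, by simpa using hpS,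
    by simpa using hpv, by simpa using hpu⟩

end ConnAvoiding

theorem card_le_of_pairwise_disjoint_of_meet {V : Type*} {r : ℕ} (D : Finset V)
    (p : Fin r → List V) (hdisj : ∀ i j, i ≠ j → ∀ v ∈ p i, v ∉ p j)
    (hmeet : ∀ i, ∃ v ∈ p i, v ∈ D) : r ≤ D.card := by
  choose φ hφp hφD using hmeet
  have hφ : Function.Injective φ := fun i j hij => by
    by_contra hne
    exact hdisj i j hne (φ i) (hφp i) (hij ▸ hφp j)
  simpa using Finset.card_le_card_of_injOn (s := Finset.univ) φ (fun i _ => hφD i) hφ.injOn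

def IOGraph.reverse {n : ℕ} (G : IOGraph n) : IOGraph n where
  V := G.V
  Adj := Function.swap G.Adj
  inp := G.out
  out := G.inp

theorem Superconcentrator.reverse {n : ℕ} {G : IOGraph n} (hG : Superconcentrator G) :
    Superconcentrator G.reverse := by
  intro r hr hrn X Y hX hY
  obtain ⟨p, hp, hdisj⟩ := hG r hr hrn Y X hY hX
  refine ⟨fun i => (p i).reverse, fun i => ?_, fun i j hij v hv hv' =>
    hdisj i j hij v (List.mem_reverse.mp hv) (List.mem_reverse.mp hv')⟩
  obtain ⟨⟨hne, hchain⟩, ⟨y, hy, hhead⟩, x, hx, hlast⟩ := hp i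
  exact ⟨⟨List.reverse_ne_nil_iff.mpr hne, List.isChain_reverse.mpr hchain⟩,
    ⟨x, hx, List.head?_reverse.trans hlast⟩, y, hy, List.getLast?_reverse.trans hhead⟩

theorem Superconcentrator.exists_connAvoiding_inputs {n : ℕ} {G : IOGraph n}
    (hG : Superconcentrator G) (D : Finset G.V) {T : Finset (Fin n)} (hT : D.card < T.card) :
    ∃ A : Finset (Fin n), n - D.card ≤ A.card ∧
      ∀ a ∈ A, ∃ i ∈ T, ConnAvoiding G.Adj D (G.inp a) (G.out i) := by
  classical
  set A := Finset.univ.filter fun a => ∃ i ∈ T, ConnAvoiding G.Adj D (G.inp a) (G.out i)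
  refine ⟨A, ?_, fun a ha => (Finset.mem_filter.mp ha).2⟩
  suffices Aᶜ.card ≤ D.card by
    rw [Finset.card_compl, Fintype.card_fin] at this
    omega
  by_contra! hA
  obtain ⟨X, hXA, hX⟩ := Finset.exists_subset_card_eq (Nat.succ_le_of_lt hA)
  obtain ⟨Y, hYT, hY⟩ := Finset.exists_subset_card_eq (Nat.succ_le_of_lt hT)
  have hn : D.card + 1 ≤ n := by simpa [hY] using Finset.card_le_univ Y
  obtain ⟨p, hp, hdisj⟩ := hG _ (Nat.le_add_left 1 _) hn X Y hX hY
  have hmeet : ∀ k, ∃ v ∈ p k, v ∈ D := by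
    intro k
    by_contra! hk
    obtain ⟨hpath, ⟨a, ha, hhead⟩, i, hi, hlast⟩ := hp k
    exact Finset.mem_compl.mp (hXA ha)
      (Finset.mem_filter.mpr ⟨Finset.mem_univ a, i, hYT hi, p k, hpath, hk, hhead, hlast⟩)
  have := card_le_of_pairwise_disjoint_of_meet D p hdisj hmeet
  omega

theorem Superconcentrator.exists_connAvoiding_outputs {n : ℕ} {G : IOGraph n}
    (hG : Superconcentrator G) (D : Finset G.V) {T : Finset (Fin n)} (hT : D.card < T.card) :
    ∃ B : Finset (Fin n), n - D.card ≤ B.card ∧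
      ∀ b ∈ B, ∃ i ∈ T, ConnAvoiding G.Adj D (G.inp i) (G.out b) := by
  obtain ⟨B, hB, hconn⟩ := hG.reverse.exists_connAvoiding_inputs D hT
  exact ⟨B, hB, fun b hb => (hconn b hb).imp fun _ => And.imp_right ConnAvoiding.of_swap⟩

theorem Finset.card_preimage_of_injective_of_subset_range {α β : Type*} {f : α → β}
    (hf : Function.Injective f) {A : Finset β} (hA : (A : Set β) ⊆ Set.range f) :
    (A.preimage f hf.injOn).card = A.card := by
  classical
  rw [Finset.card_preimage, Finset.filter_true_of_mem fun b hb => hA hb]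

theorem Finset.card_preimage_le_of_injective {α β : Type*} {f : α → β}
    (hf : Function.Injective f) (A : Finset β) : (A.preimage f hf.injOn).card ≤ A.card := by
  classical
  rw [Finset.card_preimage]
  exact Finset.card_filter_le _ _

section Sandwich

variable {W : Type} [Fintype W] [DecidableEq W] {GAdj : W → W → Prop} {n : ℕ}
  {SC1 SC2 : IOGraph n} {f g : Fin n ↪ W}

theorem sandwich_connAvoiding {D : Finset (sandwich GAdj SC1 SC2 f g).V} {D₁ : Finset SC1.V}
    {DW : Finset W} {D₂ : Finset SC2.V} (hD₁ : ∀ v, Sum.inl v ∈ D → v ∈ D₁)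
    (hDW : ∀ w, Sum.inr (Sum.inl w) ∈ D → w ∈ DW) (hD₂ : ∀ v, Sum.inr (Sum.inr v) ∈ D → v ∈ D₂)
    {a i j b : Fin n} (h₁ : ConnAvoiding SC1.Adj D₁ (SC1.inp a) (SC1.out i))
    (hW : ConnAvoiding GAdj DW (f i) (g j)) (h₂ : ConnAvoiding SC2.Adj D₂ (SC2.inp j) (SC2.out b)) :
    ConnAvoiding (sandwich GAdj SC1 SC2 f g).Adj D
      ((sandwich GAdj SC1 SC2 f g).inp a) ((sandwich GAdj SC1 SC2 f g).out b) := by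
  have e₁ := h₁.map (Adj' := (sandwich GAdj SC1 SC2 f g).Adj) Sum.inl
    (fun x y h => Or.inl ⟨x, y, h, rfl, rfl⟩) hD₁
  have eW := hW.map (Adj' := (sandwich GAdj SC1 SC2 f g).Adj) (fun w => Sum.inr (Sum.inl w))
    (fun x y h => Or.inr (Or.inl ⟨x, y, h, rfl, rfl⟩)) hDW
  have e₂ := h₂.map (Adj' := (sandwich GAdj SC1 SC2 f g).Adj) (fun v => Sum.inr (Sum.inr v))
    (fun x y h => Or.inr (Or.inr (Or.inl ⟨x, y, h, rfl, rfl⟩))) hD₂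
  exact (e₁.append (Or.inr (Or.inr (Or.inr (Or.inl ⟨i, rfl, rfl⟩)))) eW).append
    (Or.inr (Or.inr (Or.inr (Or.inr ⟨j, rfl, rfl⟩)))) e₂

theorem sandwich_exists_connAvoiding (hSC1 : Superconcentrator SC1)
    (hSC2 : Superconcentrator SC2) (D : Finset (sandwich GAdj SC1 SC2 f g).V) {A₀ B₀ : Finset W}
    (hA₀ : (A₀ : Set W) ⊆ Set.range f) (hB₀ : (B₀ : Set W) ⊆ Set.range g)
    (hDA : D.card < A₀.card) (hDB : D.card < B₀.card)
    (hconn : ∀ u ∈ A₀, ∀ v ∈ B₀, ConnAvoiding GAdj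
      (D.preimage (fun w => Sum.inr (Sum.inl w)) (Sum.inr_injective.comp Sum.inl_injective).injOn)
      u v) :
    ∃ A B : Finset (Fin n), n - D.card ≤ A.card ∧ n - D.card ≤ B.card ∧
      ∀ a ∈ A, ∀ b ∈ B, ConnAvoiding (sandwich GAdj SC1 SC2 f g).Adj D
        ((sandwich GAdj SC1 SC2 f g).inp a) ((sandwich GAdj SC1 SC2 f g).out b) := by
  set D₁ : Finset SC1.V := D.preimage Sum.inl Sum.inl_injective.injOn
  set D₂ : Finset SC2.V := D.preimage (fun v => Sum.inr (Sum.inr v))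
    (Sum.inr_injective.comp Sum.inr_injective).injOn
  have hD₁ : D₁.card ≤ D.card := Finset.card_preimage_le_of_injective Sum.inl_injective D
  have hD₂ : D₂.card ≤ D.card :=
    Finset.card_preimage_le_of_injective (Sum.inr_injective.comp Sum.inr_injective) D
  have hA₀' := Finset.card_preimage_of_injective_of_subset_range f.injective hA₀
  have hB₀' := Finset.card_preimage_of_injective_of_subset_range g.injective hB₀
  obtain ⟨A, hA, hAconn⟩ :=
    hSC1.exists_connAvoiding_inputs D₁ (T := A₀.preimage f f.injective.injOn) (by omega)
  obtain ⟨B, hB, hBconn⟩ :=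
    hSC2.exists_connAvoiding_outputs D₂ (T := B₀.preimage g g.injective.injOn) (by omega)
  refine ⟨A, B, by omega, by omega, fun a ha b hb => ?_⟩
  obtain ⟨i, hi, h₁⟩ := hAconn a ha
  obtain ⟨j, hj, h₂⟩ := hBconn b hb
  exact sandwich_connAvoiding (fun _ h => Finset.mem_preimage.mpr h)
    (fun _ h => Finset.mem_preimage.mpr h) (fun _ h => Finset.mem_preimage.mpr h) h₁
    (hconn _ (Finset.mem_preimage.mp hi) _ (Finset.mem_preimage.mp hj)) h₂

end Sandwich

/-- Suppose the middle graph `G` (on `W`, with designated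
subsets `P`, `Q`) has the property that after removing any `≤ c·n/2` vertices
there remain `A ⊆ P`, `B ⊆ Q` of size `≥ 9c·n/40` with every node of `A`
connected to every node of `B`.  Then, with `c' = 9c/40`, the sandwich of `G`
between two `n`-superconcentrators is `(|S|, n − |S|)`-ST-robust for every
vertex set `S` with `|S| ≤ c'·n/2`. -/
theorem sandwich_STRobust {W : Type} [Fintype W] [DecidableEq W]
    (c : ℝ) (hc : 0 < c) (n : ℕ) (GAdj : W → W → Prop) (P Q : Finset W)
    (hmid : ∀ S : Finset W, (S.card : ℝ) ≤ c * n / 2 →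
      ∃ A B : Finset W, A ⊆ P ∧ B ⊆ Q ∧
        9 * c * n / 40 ≤ (A.card : ℝ) ∧ 9 * c * n / 40 ≤ (B.card : ℝ) ∧
        ∀ u ∈ A, ∀ v ∈ B, ConnAvoiding GAdj S u v)
    (SC1 SC2 : IOGraph n)
    (hSC1 : Superconcentrator SC1) (hSC2 : Superconcentrator SC2)
    (f g : Fin n ↪ W)
    (hf : (P : Set W) ⊆ Set.range f) (hg : (Q : Set W) ⊆ Set.range g) :
    ∀ S : Finset (sandwich GAdj SC1 SC2 f g).V,
      (S.card : ℝ) ≤ (9 * c / 40) * n / 2 →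
      STRobust (sandwich GAdj SC1 SC2 f g) S.card (n - S.card) := by
  intro S hS D hD
  rcases n.eq_zero_or_pos with rfl | hn
  · exact ⟨∅, ∅, by simp, by simp, by simp⟩
  have hcn : 0 < c * n := by positivity
  have hDS : (D.card : ℝ) ≤ S.card := by exact_mod_cast hD
  set DW : Finset W := D.preimage (fun w => Sum.inr (Sum.inl w))
    (Sum.inr_injective.comp Sum.inl_injective).injOn
  have hDW : (DW.card : ℝ) ≤ D.card := by
    exact_mod_cast Finset.card_preimage_le_of_injective (Sum.inr_injective.comp Sum.inl_injective) D
  obtain ⟨A₀, B₀, hA₀P, hB₀Q, hA₀, hB₀, hconn⟩ := hmid DW (by linarith)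
  have hDA : D.card < A₀.card := by exact_mod_cast (by linarith : (D.card : ℝ) < A₀.card)
  have hDB : D.card < B₀.card := by exact_mod_cast (by linarith : (D.card : ℝ) < B₀.card)
  obtain ⟨A, B, hA, hB, hAB⟩ := sandwich_exists_connAvoiding hSC1 hSC2 D
    ((Finset.coe_subset.mpr hA₀P).trans hf) ((Finset.coe_subset.mpr hB₀Q).trans hg) hDA hDB hconn
  exact ⟨A, B, by omega, by omega, hAB⟩
end

section
/- Every n-connector has at least log2(n!) edges; consequently, every n-connector whose maximum indegree is bounded by a constant δ has at least log2(n!)/δ = Ω(n log n) vertices. -/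
namespace List

variable {α : Type*}

theorem IsChain.exists_nodup_sublist {R : α → α → Prop} :
    ∀ {p : List α}, p.IsChain R →
      ∃ q, q <+ p ∧ q.IsChain R ∧ q.Nodup ∧ q.head? = p.head? ∧ q.getLast? = p.getLast?
  | [], _ => ⟨[], by simp⟩
  | a :: t, hp => by
    obtain ⟨hat, ht⟩ := List.isChain_cons.1 hp
    obtain ⟨q, hqt, hq, hnd, hhead, hlast⟩ := ht.exists_nodup_sublist
    by_cases ha : a ∈ q
    · -- `a` closes a loop: restart `q` at the occurrence of `a`
      obtain ⟨s, u, rfl⟩ := append_of_mem ha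
      refine ⟨a :: u, (suffix_append s _).sublist.trans (hqt.trans (sublist_cons_self a t)),
        hq.suffix (suffix_append s _), hnd.sublist (suffix_append s _).sublist, rfl, ?_⟩
      rw [getLast?_cons (l := t), ← hlast, getLast?_append, getLast?_cons]
      rfl
    · refine ⟨a :: q, hqt.cons_cons a, List.isChain_cons.2 ⟨?_, hq⟩, nodup_cons.2 ⟨ha, hnd⟩, rfl,
        ?_⟩
      · simpa [hhead] using hat
      · simp [getLast?_cons, hlast]

theorem Nodup.eq_of_pair_infix {p : List α} (hp : p.Nodup) {u v w : α}
    (hv : [u, v] <:+: p) (hw : [u, w] <:+: p) : v = w := by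
  obtain ⟨s, t, rfl⟩ := hv
  obtain ⟨s', t', h⟩ := hw
  simp only [append_assoc, cons_append, nil_append] at hp h
  have hu : u ∉ s ∧ u ∉ v :: t := by simpa using (nodup_cons.1 (nodup_middle.1 hp)).1
  exact (cons_eq_cons.1 ((append_cons_inj_of_notMem hu.1 hu.2).1 h.symm).2.2).1

theorem Nodup.not_pair_infix_of_getLast? {p : List α} (hp : p.Nodup) {y w : α}
    (hy : p.getLast? = some y) : ¬ [y, w] <:+: p := by
  rintro ⟨s, t, rfl⟩
  simp only [append_assoc, cons_append, nil_append] at hp hy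
  rw [getLast?_append, getLast?_cons_cons] at hy
  have hyt : y ∈ w :: t := mem_of_getLast? (by simpa using hy)
  exact (nodup_cons.1 (nodup_middle.1 hp)).1 (mem_append_right s hyt)

theorem isChain_pair_infix : ∀ p : List α, p.IsChain fun u v => [u, v] <:+: p
  | [] => .nil
  | [_] => .singleton _
  | a :: b :: t => isChain_cons_cons.2
      ⟨(prefix_append [a, b] t).isInfix,
        (isChain_pair_infix (b :: t)).imp fun _ _ h => h.trans (suffix_cons a _).isInfix⟩

theorem eq_of_isChain_of_rightUnique {F : α → α → Prop} (hF : Relator.RightUnique F) :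
    ∀ {p q : List α}, p.IsChain F → q.IsChain F → p.head? = q.head? →
      (∀ y ∈ p.getLast?, ∀ w, ¬ F y w) → (∀ y ∈ q.getLast?, ∀ w, ¬ F y w) → p = q
  | [], [], _, _, _, _, _ => rfl
  | [a], [_], _, _, h, _, _ => by simpa using h
  | [a], _ :: d :: _, _, hq, h, hpend, _ => by
    obtain rfl : a = _ := by simpa using h
    exact absurd (isChain_cons_cons.1 hq).1 (hpend a rfl d)
  | _ :: b :: _, [c], hp, _, h, _, hqend => by
    obtain rfl : _ = c := by simpa using h
    exact absurd (isChain_cons_cons.1 hp).1 (hqend _ rfl b)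
  | a :: b :: t, _ :: d :: s, hp, hq, h, hpend, hqend => by
    obtain rfl : a = _ := by simpa using h
    obtain rfl := hF (isChain_cons_cons.1 hp).1 (isChain_cons_cons.1 hq).1
    rw [eq_of_isChain_of_rightUnique hF (isChain_cons_cons.1 hp).2 (isChain_cons_cons.1 hq).2 rfl
      (by simpa using hpend) (by simpa using hqend)]
  | [], _ :: _, _, _, h, _, _ | _ :: _, [], _, _, h, _, _ => by simp at h

end List

theorem numEdges_eq_sum_indeg {V : Type*} [Fintype V] (Adj : V → V → Prop) :
    numEdges Adj = ∑ v, indeg Adj v := by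
  let e : {e : V × V // Adj e.1 e.2} ≃ Σ v, {u // Adj u v} :=
    (Equiv.subtypeEquiv (Equiv.prodComm V V) fun _ => Iff.rfl).trans
      (Equiv.subtypeProdEquivSigmaSubtype fun v u => Adj u v)
  rw [numEdges, Nat.card_congr e, Nat.card_sigma]
  rfl

theorem numEdges_le_card_mul_of_indeg_le {V : Type*} [Fintype V] (Adj : V → V → Prop) {δ : ℕ}
    (h : ∀ v, indeg Adj v ≤ δ) : numEdges Adj ≤ Nat.card V * δ := by
  calc numEdges Adj = ∑ v, indeg Adj v := numEdges_eq_sum_indeg Adj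
    _ ≤ ∑ _v : V, δ := Finset.sum_le_sum fun v _ => h v
    _ = Nat.card V * δ := by simp [Nat.card_eq_fintype_card]

section Routing

variable {n : ℕ}

structure IOGraph.Routing (G : IOGraph n) (π : Equiv.Perm (Fin n)) where
  path : Fin n → List G.V
  isChain (i : Fin n) : (path i).IsChain G.Adj
  nodup (i : Fin n) : (path i).Nodup
  head?_eq (i : Fin n) : (path i).head? = some (G.inp i)
  getLast?_eq (i : Fin n) : (path i).getLast? = some (G.out (π i))
  disjoint : Pairwise fun i j => (path i).Disjoint (path j)

namespace IOGraph.Routing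

variable {G : IOGraph n} {π : Equiv.Perm (Fin n)} (R : G.Routing π)

def UsesEdge (u v : G.V) : Prop := ∃ i, [u, v] <:+: R.path i

theorem adj_of_usesEdge {u v : G.V} (h : R.UsesEdge u v) : G.Adj u v := by
  obtain ⟨i, hi⟩ := h
  exact List.isChain_pair.1 ((R.isChain i).infix hi)

theorem isChain_usesEdge (i : Fin n) : (R.path i).IsChain R.UsesEdge :=
  (List.isChain_pair_infix _).imp fun _ _ h => ⟨i, h⟩

theorem eq_of_mem_path {v : G.V} {i j : Fin n} (hi : v ∈ R.path i) (hj : v ∈ R.path j) :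
    i = j :=
  by_contra fun hij => R.disjoint hij hi hj

theorem usesEdge_rightUnique : Relator.RightUnique R.UsesEdge := by
  rintro u v w ⟨i, hi⟩ ⟨j, hj⟩
  obtain rfl := R.eq_of_mem_path (hi.subset List.mem_cons_self) (hj.subset List.mem_cons_self)
  exact (R.nodup i).eq_of_pair_infix hi hj

theorem not_usesEdge_of_mem_getLast? (i : Fin n) :
    ∀ y ∈ (R.path i).getLast?, ∀ w, ¬ R.UsesEdge y w := by
  rintro y hy w ⟨j, hj⟩
  obtain rfl := R.eq_of_mem_path (List.mem_of_getLast? hy) (hj.subset List.mem_cons_self)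
  exact (R.nodup i).not_pair_infix_of_getLast? hy hj

theorem perm_eq_of_usesEdge_eq {π' : Equiv.Perm (Fin n)} (R' : G.Routing π')
    (h : R.UsesEdge = R'.UsesEdge) : π = π' := by
  refine Equiv.ext fun i => G.out.injective (Option.some.inj ?_)
  have hpath : R.path i = R'.path i :=
    List.eq_of_isChain_of_rightUnique R.usesEdge_rightUnique (R.isChain_usesEdge i)
      (h ▸ R'.isChain_usesEdge i) (by rw [R.head?_eq, R'.head?_eq])
      (R.not_usesEdge_of_mem_getLast? i) (h ▸ R'.not_usesEdge_of_mem_getLast? i)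
  rw [← R.getLast?_eq, ← R'.getLast?_eq, hpath]

end IOGraph.Routing

theorem Connector.nonempty_routing {G : IOGraph n} (hG : Connector G) (π : Equiv.Perm (Fin n)) :
    Nonempty (G.Routing π) := by
  rcases n.eq_zero_or_pos with rfl | hn
  · exact ⟨⟨fun i => i.elim0, fun i => i.elim0, fun i => i.elim0, fun i => i.elim0,
      fun i => i.elim0, fun i => i.elim0⟩⟩
  obtain ⟨P, hP, hdisj⟩ := hG.2 n hn le_rfl (.refl _) π.toEmbedding
  choose Q hQP hQ hnd hhead hlast using fun i => List.IsChain.exists_nodup_sublist (hP i).1.2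
  exact ⟨⟨Q, hQ, hnd, fun i => (hhead i).trans (hP i).2.1, fun i => (hlast i).trans (hP i).2.2,
    fun i j hij v hvi hvj => hdisj i j hij v ((hQP i).subset hvi) ((hQP j).subset hvj)⟩⟩

theorem Connector.factorial_le_two_pow_numEdges {G : IOGraph n} (hG : Connector G) :
    n.factorial ≤ 2 ^ numEdges G.Adj := by
  classical
  let R π := (hG.nonempty_routing π).some
  let edges π : Set {e : G.V × G.V // G.Adj e.1 e.2} := {e | (R π).UsesEdge e.1.1 e.1.2}
  have hinj : Function.Injective edges := fun π π' h =>
    (R π).perm_eq_of_usesEdge_eq (R π') <| funext₂ fun u v => propext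
      ⟨fun huv => (Set.ext_iff.1 h ⟨(u, v), (R π).adj_of_usesEdge huv⟩).1 huv,
        fun huv => (Set.ext_iff.1 h ⟨(u, v), (R π').adj_of_usesEdge huv⟩).2 huv⟩
  calc n.factorial = Nat.card (Equiv.Perm (Fin n)) := by rw [Nat.card_perm, Nat.card_fin]
    _ ≤ Nat.card (Set {e : G.V × G.V // G.Adj e.1 e.2}) :=
      Nat.card_le_card_of_injective edges hinj
    _ = 2 ^ numEdges G.Adj := by
      rw [numEdges, Nat.card_eq_fintype_card, Fintype.card_set, Nat.card_eq_fintype_card]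

/-- Every `n`-connector has at least `log₂(n!)` edges; as a
consequence, every `n`-connector whose maximum indegree is bounded by a constant
`δ` has at least `log₂(n!)/δ = Ω(n log n)` vertices. -/
theorem connector_edge_lower_bound {n : ℕ} (G : IOGraph n) (hG : Connector G) :
    Real.logb 2 (Nat.factorial n) ≤ (numEdges G.Adj : ℝ) ∧
    ∀ δ : ℕ, 0 < δ → (∀ v : G.V, indeg G.Adj v ≤ δ) →
      Real.logb 2 (Nat.factorial n) / (δ : ℝ) ≤ (Nat.card G.V : ℝ) := by
  have hedges : Real.logb 2 n.factorial ≤ numEdges G.Adj := by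
    rw [Real.logb_le_iff_le_rpow one_lt_two (by positivity), Real.rpow_natCast]
    exact_mod_cast hG.factorial_le_two_pow_numEdges
  refine ⟨hedges, fun δ _ hδ => div_le_of_le_mul₀ δ.cast_nonneg (Nat.cast_nonneg _) ?_⟩
  exact hedges.trans (by exact_mod_cast numEdges_le_card_mul_of_indeg_le G.Adj hδ)
end Routing
end
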